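/- arXiv:2009.14676 — 2 statements merged into one kernel-verified Lean document; each statement's English description precedes it below -/
import Mathlib

section
/- Let X₁, …, X_l be smooth, complete, pairwise commuting vector fields on a closed submanifold M of a Euclidean space, and let u ∈ L∞(ℝ, ℝ^l) with antiderivative U(τ) = ∫₀^τ u. Define X^τ := Uⁱ(τ) Xᵢ (summation over i). Then for every a, ω > 0 and ξ₀ ∈ M, the maximal solution of ξ'(t) = aω uⁱ(ωt) Xᵢ(ξ(t)), ξ(0) = ξ₀, is globally defined and given by ξ(t) = Φ^{X^{ωt}}_a(ξ₀), where Φ^X_t denotes the flow of X. -/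
open MeasureTheory Metric Set Real Filter Asymptotics Topology

set_option linter.unusedSectionVars false

section Key
variable {E : Type*} [NormedAddCommGroup E] [NormedSpace ℝ E]

lemma gron_est' {K ε x b : ℝ} (hK : 0 < K) (hε : 0 ≤ ε) (hxb : x ≤ b) :
    gronwallBound 0 K ε x ≤ ε * (Real.exp (K * b) / K) := by
  rw [gronwallBound_of_K_ne_0 hK.ne']
  have h1 : Real.exp (K * x) - 1 ≤ Real.exp (K * b) := by
    have := Real.exp_le_exp.2 (mul_le_mul_of_nonneg_left hxb hK.le)
    linarith
  have h2 : ε / K * (Real.exp (K * x) - 1) ≤ ε / K * Real.exp (K * b) :=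
    mul_le_mul_of_nonneg_left h1 (div_nonneg hε hK.le)
  calc 0 * Real.exp (K * x) + ε / K * (Real.exp (K * x) - 1)
      = ε / K * (Real.exp (K * x) - 1) := by ring
    _ ≤ ε / K * Real.exp (K * b) := h2
    _ = ε * (Real.exp (K * b) / K) := by ring

lemma bddOn' {l : ℕ} {G : Type*} [NormedAddCommGroup G] (F : Fin l → E → G)
    (hF : ∀ i, Continuous (F i)) {Ks : Set E} (hK : IsCompact Ks) :
    ∃ M : ℝ, 0 ≤ M ∧ ∀ i, ∀ p ∈ Ks, ‖F i p‖ ≤ M := by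
  have h : ∀ i : Fin l, ∃ C, ∀ p ∈ Ks, ‖F i p‖ ≤ C := fun i =>
    hK.exists_bound_of_continuousOn (hF i).continuousOn
  choose C hC using h
  refine ⟨∑ i, max (C i) 0, Finset.sum_nonneg fun i _ => le_max_right _ _, fun i p hp => ?_⟩
  calc ‖F i p‖ ≤ C i := hC i p hp
    _ ≤ max (C i) 0 := le_max_left _ _
    _ ≤ ∑ j, max (C j) 0 :=
        Finset.single_le_sum (f := fun j => max (C j) 0)
          (fun j _ => le_max_right _ _) (Finset.mem_univ i)

lemma nice' {l : ℕ} (X : Fin l → E → E) (hX : ∀ i, ContDiff ℝ (⊤ : ℕ∞) (X i))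
    {Ks : Set E} (hK : IsCompact Ks) :
    ∃ r L : ℝ, 0 < r ∧ 0 ≤ L ∧ ∀ p ∈ Ks, ∃ S : Set E, Convex ℝ S ∧ Metric.closedBall p r ⊆ S ∧
      ∀ i, (∀ x ∈ S, ∀ y ∈ S, ‖X i x - X i y‖ ≤ L * ‖x - y‖) ∧
           (∀ x ∈ S, ∀ y ∈ S, ‖fderiv ℝ (X i) x - fderiv ℝ (X i) y‖ ≤ L * ‖x - y‖) := by
  have hfd : ∀ i, ContDiff ℝ (⊤ : ℕ∞) (fderiv ℝ (X i)) := fun i =>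
    (hX i).fderiv_right (by simp)
  have H : ∀ p : E, ∃ d Lp : ℝ, 0 < d ∧ 0 ≤ Lp ∧
      ∀ i, (∀ x ∈ Metric.ball p (4 * d), ∀ y ∈ Metric.ball p (4 * d),
              ‖X i x - X i y‖ ≤ Lp * ‖x - y‖) ∧
           (∀ x ∈ Metric.ball p (4 * d), ∀ y ∈ Metric.ball p (4 * d),
              ‖fderiv ℝ (X i) x - fderiv ℝ (X i) y‖ ≤ Lp * ‖x - y‖) := by
    intro p
    have h1 : ∀ i : Fin l, ∃ (Ki : NNReal) (t : Set E), t ∈ 𝓝 p ∧ LipschitzOnWith Ki (X i) t :=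
      fun i => (((hX i).of_le (by simp)).contDiffAt (x := p)).exists_lipschitzOnWith
    have h2 : ∀ i : Fin l, ∃ (Ki : NNReal) (t : Set E), t ∈ 𝓝 p ∧
        LipschitzOnWith Ki (fderiv ℝ (X i)) t := fun i =>
      (((hfd i).of_le (by simp)).contDiffAt (x := p)).exists_lipschitzOnWith
    choose K1 t1 ht1 hl1 using h1
    choose K2 t2 ht2 hl2 using h2
    have hT : ((⋂ i, t1 i) ∩ ⋂ i, t2 i) ∈ 𝓝 p :=
      Filter.inter_mem (Filter.iInter_mem.2 ht1) (Filter.iInter_mem.2 ht2)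
    obtain ⟨ε, hε, hball⟩ := Metric.mem_nhds_iff.1 hT
    have hsub : Metric.ball p (4 * (ε / 4)) ⊆ (⋂ i, t1 i) ∩ ⋂ i, t2 i := by
      rw [show 4 * (ε / 4) = ε by ring]; exact hball
    refine ⟨ε / 4, ∑ j, ((K1 j : ℝ) + (K2 j : ℝ)), by linarith,
      Finset.sum_nonneg fun j _ => by positivity, fun i => ?_⟩
    have hK1le : (K1 i : ℝ) ≤ ∑ j, ((K1 j : ℝ) + (K2 j : ℝ)) :=
      le_trans (le_add_of_nonneg_right (by positivity))
        (Finset.single_le_sum (f := fun j => ((K1 j : ℝ) + (K2 j : ℝ)))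
          (fun j _ => by positivity) (Finset.mem_univ i))
    have hK2le : (K2 i : ℝ) ≤ ∑ j, ((K1 j : ℝ) + (K2 j : ℝ)) :=
      le_trans (le_add_of_nonneg_left (by positivity))
        (Finset.single_le_sum (f := fun j => ((K1 j : ℝ) + (K2 j : ℝ)))
          (fun j _ => by positivity) (Finset.mem_univ i))
    constructor
    · intro x hx y hy
      have h := (hl1 i).dist_le_mul x (mem_iInter.1 (hsub hx).1 i) y (mem_iInter.1 (hsub hy).1 i)
      rw [dist_eq_norm, dist_eq_norm] at h
      exact h.trans (mul_le_mul_of_nonneg_right hK1le (norm_nonneg _))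
    · intro x hx y hy
      have h := (hl2 i).dist_le_mul x (mem_iInter.1 (hsub hx).2 i) y (mem_iInter.1 (hsub hy).2 i)
      rw [dist_eq_norm, dist_eq_norm] at h
      exact h.trans (mul_le_mul_of_nonneg_right hK2le (norm_nonneg _))
  choose d Lp hd hLp hn using H
  obtain ⟨t, htK, hcov⟩ := hK.elim_nhds_subcover (fun p => Metric.ball p (d p))
    (fun p _ => Metric.ball_mem_nhds p (hd p))
  by_cases hne : t.Nonempty
  · refine ⟨t.inf' hne d, ∑ c ∈ t, Lp c, ?_, Finset.sum_nonneg fun c _ => hLp c, ?_⟩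
    · exact (Finset.lt_inf'_iff hne).2 fun c _ => hd c
    intro p hp
    obtain ⟨c, hct, hpc⟩ := by
      have := hcov hp
      simpa only [Set.mem_iUnion, exists_prop] using this
    refine ⟨Metric.ball c (4 * d c), convex_ball _ _, ?_, fun i => ?_⟩
    · intro q hq
      have h1 : dist q p ≤ t.inf' hne d := mem_closedBall.1 hq
      have h2 : dist p c < d c := mem_ball.1 hpc
      have h3 : t.inf' hne d ≤ d c := Finset.inf'_le _ hct
      have : dist q c < 4 * d c := by
        calc dist q c ≤ dist q p + dist p c := dist_triangle _ _ _
          _ < d c + d c := by linarith [h1.trans h3]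
          _ ≤ 4 * d c := by linarith [(hd c).le]
      exact mem_ball.2 this
    have hLple : Lp c ≤ ∑ c' ∈ t, Lp c' :=
      Finset.single_le_sum (fun c' _ => hLp c') hct
    refine ⟨fun x hx y hy => ?_, fun x hx y hy => ?_⟩
    · exact ((hn c i).1 x hx y hy).trans (mul_le_mul_of_nonneg_right hLple (norm_nonneg _))
    · exact ((hn c i).2 x hx y hy).trans (mul_le_mul_of_nonneg_right hLple (norm_nonneg _))
  · -- t empty: Ks ⊆ ∅, so Ks = ∅, anything works
    rw [Finset.not_nonempty_iff_eq_empty] at hne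
    refine ⟨1, 0, one_pos, le_refl _, fun p hp => ?_⟩
    exfalso
    have := hcov hp
    simp [hne] at this

set_option maxHeartbeats 1000000 in
lemma key {l : ℕ} (X : Fin l → E → E) (hX : ∀ i, ContDiff ℝ (⊤ : ℕ∞) (X i))
    (hcomm : ∀ i j p, fderiv ℝ (X j) p (X i p) = fderiv ℝ (X i) p (X j p))
    (u U : Fin l → ℝ → ℝ) (Cu : Fin l → ℝ) (hCu : ∀ i, 0 ≤ Cu i)
    (hulip : ∀ i σ τ, |U i σ - U i τ| ≤ Cu i * |σ - τ|)
    (Φ : ℝ → ℝ → E → E) (hΦ0 : ∀ τ x, Φ τ 0 x = x)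
    (hΦ : ∀ τ a x, HasDerivAt (fun s => Φ τ s x) (∑ i, U i τ • X i (Φ τ a x)) a)
    (a : ℝ) (ha : 0 < a) (x : E) (τ₀ : ℝ)
    (hdiff : ∀ i, HasDerivAt (U i) (u i τ₀) τ₀) :
    HasDerivAt (fun τ => Φ τ a x) (a • ∑ i, u i τ₀ • X i (Φ τ₀ a x)) τ₀ := by
  -- basic objects
  set γ : ℝ → E := fun s => Φ τ₀ s x with hγdef
  have hγ : ∀ s, HasDerivAt γ (∑ i, U i τ₀ • X i (γ s)) s := fun s => hΦ τ₀ s x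
  have hγc : Continuous γ := by
    rw [continuous_iff_continuousAt]; exact fun s => (hγ s).continuousAt
  have hXd : ∀ (i) (p : E), HasFDerivAt (X i) (fderiv ℝ (X i) p) p := fun i p =>
    (((hX i).differentiable (by simp)) p).hasFDerivAt
  have hXc : ∀ i, Continuous (X i) := fun i => (hX i).continuous
  -- the compact track
  set Ks : Set E := γ '' Icc 0 a with hKsdef
  have hKs : IsCompact Ks := (isCompact_Icc).image hγc
  -- constants
  obtain ⟨r, L, hr, hL, hS⟩ := nice' X hX hKs
  obtain ⟨MK, hMK0, hMK⟩ := bddOn' X hXc hKs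
  obtain ⟨MD, hMD0, hMD⟩ := bddOn' (fun i => fderiv ℝ (X i))
    (fun i => ((hX i).fderiv_right (by simp : ((⊤ : ℕ∞) : WithTop ℕ∞) + 1 ≤ ((⊤ : ℕ∞) : WithTop ℕ∞))).continuous) hKs
  set MX : ℝ := MK + L * r with hMXdef
  have hMX0 : 0 ≤ MX := by positivity
  set CUS : ℝ := ∑ i, Cu i with hCUSdef
  have hCUS0 : 0 ≤ CUS := Finset.sum_nonneg fun i _ => hCu i
  set cu : ℝ := ∑ i, |u i τ₀| with hcudef
  have hcu0 : 0 ≤ cu := Finset.sum_nonneg fun i _ => abs_nonneg _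
  set cU : ℝ := ∑ i, |U i τ₀| with hcUdef
  have hcU0 : 0 ≤ cU := Finset.sum_nonneg fun i _ => abs_nonneg _
  set KK : ℝ := cU * L + 1 with hKKdef
  have hKK : 0 < KK := by positivity
  set c₁ : ℝ := CUS * MX * (Real.exp (KK * a) / KK) with hc₁def
  have hc₁0 : 0 ≤ c₁ := by positivity
  set KK2 : ℝ := cU * MD + 1 with hKK2def
  have hKK2 : 0 < KK2 := by positivity
  set c₂ : ℝ := Real.exp (KK2 * a) / KK2 with hc₂def
  have hc₂0 : 0 ≤ c₂ := by positivity
  set h₀ : ℝ := min 1 (r / (2 * (c₁ + 1))) with hh₀def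
  have hh₀ : 0 < h₀ := lt_min one_pos (by positivity)
  have hc₁h₀ : c₁ * h₀ ≤ r / 2 := by
    have h1 : h₀ ≤ r / (2 * (c₁ + 1)) := min_le_right _ _
    have h2 : c₁ * h₀ ≤ c₁ * (r / (2 * (c₁ + 1))) := by
      apply mul_le_mul_of_nonneg_left h1 hc₁0
    calc c₁ * h₀ ≤ c₁ * (r / (2 * (c₁ + 1))) := h2
      _ ≤ (c₁ + 1) * (r / (2 * (c₁ + 1))) := by
          apply mul_le_mul_of_nonneg_right (by linarith) (by positivity)
      _ = r / 2 := by field_simp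
  -- membership of track
  have hγK : ∀ s ∈ Icc (0:ℝ) a, γ s ∈ Ks := fun s hs => mem_image_of_mem γ hs
  -- pointwise bound for X near the track
  have hXq : ∀ p ∈ Ks, ∀ q ∈ Metric.closedBall p r, ∀ i, ‖X i q‖ ≤ MX := by
    intro p hp q hq i
    obtain ⟨S, hconv, hsub, hLip⟩ := hS p hp
    have hpS : p ∈ S := hsub (mem_closedBall_self hr.le)
    have hqS : q ∈ S := hsub hq
    have h1 : ‖X i q - X i p‖ ≤ L * ‖q - p‖ := (hLip i).1 q hqS p hpS
    have h2 : ‖q - p‖ ≤ r := by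
      rw [← dist_eq_norm]; exact mem_closedBall.1 hq
    calc ‖X i q‖ = ‖X i p + (X i q - X i p)‖ := by congr 1; abel
      _ ≤ ‖X i p‖ + ‖X i q - X i p‖ := norm_add_le _ _
      _ ≤ MK + L * r := by
          refine add_le_add (hMK i p hp) (h1.trans ?_)
          exact mul_le_mul_of_nonneg_left h2 hL
  -- Stage 1 : a priori bound on δ
  have stage1 : ∀ h : ℝ, |h| ≤ h₀ → ∀ s ∈ Icc (0:ℝ) a, ‖Φ (τ₀ + h) s x - γ s‖ ≤ c₁ * |h| := by
    intro h hh
    set g : ℝ → E := fun s => Φ (τ₀ + h) s x - γ s with hgdef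
    have hg' : ∀ s, HasDerivAt g
        ((∑ i, U i (τ₀ + h) • X i (Φ (τ₀ + h) s x)) - ∑ i, U i τ₀ • X i (γ s)) s :=
      fun s => (hΦ (τ₀ + h) s x).sub (hγ s)
    have hgc : Continuous g := by
      rw [continuous_iff_continuousAt]; exact fun s => (hg' s).continuousAt
    have hg0 : g 0 = 0 := by simp [hgdef, hγdef, hΦ0]
    have core : ∀ b ∈ Icc (0:ℝ) a, (∀ s ∈ Icc (0:ℝ) b, ‖g s‖ ≤ r) →
        ∀ s ∈ Icc (0:ℝ) b, ‖g s‖ ≤ c₁ * |h| := by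
      intro b hb hreg s hs
      have hgron := norm_le_gronwallBound_of_norm_deriv_right_le
        (f := g)
        (f' := fun s => (∑ i, U i (τ₀ + h) • X i (Φ (τ₀ + h) s x)) - ∑ i, U i τ₀ • X i (γ s))
        (δ := 0) (K := KK) (ε := CUS * MX * |h|) (a := 0) (b := b)
        hgc.continuousOn (fun s' _ => (hg' s').hasDerivWithinAt)
        (by rw [hg0]; simp) ?_ s hs
      · have hsa : s - 0 ≤ a := by
          have := hs.2.trans hb.2
          linarith
        calc ‖g s‖ ≤ gronwallBound 0 KK (CUS * MX * |h|) (s - 0) := hgron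
          _ ≤ (CUS * MX * |h|) * (Real.exp (KK * a) / KK) :=
              gron_est' hKK (by positivity) hsa
          _ = c₁ * |h| := by rw [hc₁def]; ring
      · intro s' hs'
        have hs'a : s' ∈ Icc (0:ℝ) a := ⟨hs'.1, hs'.2.le.trans hb.2⟩
        have hpK : γ s' ∈ Ks := hγK s' hs'a
        have hqB : Φ (τ₀ + h) s' x ∈ Metric.closedBall (γ s') r := by
          rw [mem_closedBall, dist_eq_norm]; exact hreg s' ⟨hs'.1, hs'.2.le⟩
        obtain ⟨S, hconv, hsub, hLip⟩ := hS _ hpK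
        have hqS : Φ (τ₀ + h) s' x ∈ S := hsub hqB
        have hpS : γ s' ∈ S := hsub (mem_closedBall_self hr.le)
        have split : (∑ i, U i (τ₀ + h) • X i (Φ (τ₀ + h) s' x)) - ∑ i, U i τ₀ • X i (γ s')
            = (∑ i, (U i (τ₀ + h) - U i τ₀) • X i (Φ (τ₀ + h) s' x))
              + ∑ i, U i τ₀ • (X i (Φ (τ₀ + h) s' x) - X i (γ s')) := by
          simp only [sub_smul, smul_sub, Finset.sum_sub_distrib]
          abel
        have hA : ‖∑ i, (U i (τ₀ + h) - U i τ₀) • X i (Φ (τ₀ + h) s' x)‖ ≤ CUS * MX * |h| := by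
          calc ‖∑ i, (U i (τ₀ + h) - U i τ₀) • X i (Φ (τ₀ + h) s' x)‖
              ≤ ∑ i, ‖(U i (τ₀ + h) - U i τ₀) • X i (Φ (τ₀ + h) s' x)‖ := norm_sum_le _ _
            _ ≤ ∑ i, Cu i * |h| * MX := by
                apply Finset.sum_le_sum
                intro i _
                rw [norm_smul, Real.norm_eq_abs]
                have h1 : |U i (τ₀ + h) - U i τ₀| ≤ Cu i * |h| := by
                  have := hulip i (τ₀ + h) τ₀
                  simpa using this
                exact mul_le_mul h1 (hXq _ hpK _ hqB i) (norm_nonneg _)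
                  (mul_nonneg (hCu i) (abs_nonneg h))
            _ = CUS * MX * |h| := by
                rw [hCUSdef, Finset.sum_mul, Finset.sum_mul]
                apply Finset.sum_congr rfl
                intro i _; ring
        have hB : ‖∑ i, U i τ₀ • (X i (Φ (τ₀ + h) s' x) - X i (γ s'))‖ ≤ KK * ‖g s'‖ := by
          calc ‖∑ i, U i τ₀ • (X i (Φ (τ₀ + h) s' x) - X i (γ s'))‖
              ≤ ∑ i, ‖U i τ₀ • (X i (Φ (τ₀ + h) s' x) - X i (γ s'))‖ := norm_sum_le _ _
            _ ≤ ∑ i, |U i τ₀| * (L * ‖g s'‖) := by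
                apply Finset.sum_le_sum
                intro i _
                rw [norm_smul, Real.norm_eq_abs]
                exact mul_le_mul_of_nonneg_left ((hLip i).1 _ hqS _ hpS) (abs_nonneg _)
            _ = cU * L * ‖g s'‖ := by
                rw [hcUdef, Finset.sum_mul, Finset.sum_mul]
                apply Finset.sum_congr rfl
                intro i _; ring
            _ ≤ KK * ‖g s'‖ := by
                apply mul_le_mul_of_nonneg_right _ (norm_nonneg _)
                rw [hKKdef]; linarith
        show ‖(∑ i, U i (τ₀ + h) • X i (Φ (τ₀ + h) s' x)) - ∑ i, U i τ₀ • X i (γ s')‖ ≤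
          KK * ‖g s'‖ + CUS * MX * |h|
        rw [split]
        calc ‖(∑ i, (U i (τ₀ + h) - U i τ₀) • X i (Φ (τ₀ + h) s' x))
              + ∑ i, U i τ₀ • (X i (Φ (τ₀ + h) s' x) - X i (γ s'))‖
            ≤ ‖∑ i, (U i (τ₀ + h) - U i τ₀) • X i (Φ (τ₀ + h) s' x)‖
              + ‖∑ i, U i τ₀ • (X i (Φ (τ₀ + h) s' x) - X i (γ s'))‖ := norm_add_le _ _
          _ ≤ CUS * MX * |h| + KK * ‖g s'‖ := add_le_add hA hB
          _ = KK * ‖g s'‖ + CUS * MX * |h| := by ring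
    -- escape-time argument
    set Sset : Set ℝ := {b | b ∈ Icc (0:ℝ) a ∧ ∀ s ∈ Icc (0:ℝ) b, ‖g s‖ ≤ r} with hSsetdef
    have h0mem : (0:ℝ) ∈ Sset := by
      refine ⟨⟨le_refl _, ha.le⟩, fun s hs => ?_⟩
      have hseq : s = 0 := le_antisymm hs.2 hs.1
      rw [hseq, hg0]; simp [hr.le]
    have hbdd : BddAbove Sset := ⟨a, fun b hb => hb.1.2⟩
    set b' : ℝ := sSup Sset with hb'def
    have hb'0 : 0 ≤ b' := le_csSup hbdd h0mem
    have hb'a : b' ≤ a := csSup_le ⟨0, h0mem⟩ fun b hb => hb.1.2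
    have hltb' : ∀ s, 0 ≤ s → s < b' → ‖g s‖ ≤ r := by
      intro s hs0 hsb
      obtain ⟨b, hbmem, hsb2⟩ := exists_lt_of_lt_csSup ⟨0, h0mem⟩ hsb
      exact hbmem.2 s ⟨hs0, hsb2.le⟩
    have hb'S : ∀ s ∈ Icc (0:ℝ) b', ‖g s‖ ≤ r := by
      intro s hs
      rcases lt_or_eq_of_le hs.2 with hlt | heq
      · exact hltb' s hs.1 hlt
      · rcases eq_or_lt_of_le hb'0 with hb0 | hb0
        · rw [heq, ← hb0, hg0]; simp [hr.le]
        · have htend : Tendsto (fun s' => ‖g s'‖) (𝓝[<] b') (𝓝 ‖g b'‖) :=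
            (hgc.norm.tendsto b').mono_left nhdsWithin_le_nhds
          have hev : ∀ᶠ s' in 𝓝[<] b', ‖g s'‖ ≤ r := by
            filter_upwards [Ioo_mem_nhdsLT_of_mem (⟨hb0, le_refl b'⟩ : b' ∈ Ioc 0 b')]
              with s' hs'
            exact hltb' s' hs'.1.le hs'.2
          have hle := le_of_tendsto htend hev
          rwa [heq]
    have hb'eq : b' = a := by
      by_contra hne
      have hb'lt : b' < a := lt_of_le_of_ne hb'a hne
      have hgb' : ‖g b'‖ ≤ r / 2 := by
        have h1 := core b' ⟨hb'0, hb'a⟩ hb'S b' ⟨hb'0, le_refl _⟩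
        calc ‖g b'‖ ≤ c₁ * |h| := h1
          _ ≤ c₁ * h₀ := mul_le_mul_of_nonneg_left hh hc₁0
          _ ≤ r / 2 := hc₁h₀
      have hltr : ‖g b'‖ < r := lt_of_le_of_lt hgb' (by linarith)
      have hev : ∀ᶠ s' in 𝓝 b', ‖g s'‖ < r :=
        (hgc.norm.tendsto b') (Iio_mem_nhds hltr)
      obtain ⟨d, hd, hdprop⟩ := Metric.eventually_nhds_iff.1 hev
      set b'' : ℝ := min (b' + d / 2) a with hb''def
      have hb''gt : b' < b'' := lt_min (by linarith) hb'lt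
      have hb''mem : b'' ∈ Sset := by
        refine ⟨⟨by positivity, min_le_right _ _⟩, fun s hs => ?_⟩
        rcases le_or_gt s b' with hsb | hsb
        · exact hb'S s ⟨hs.1, hsb⟩
        · apply le_of_lt
          apply hdprop
          rw [Real.dist_eq, abs_of_pos (by linarith)]
          have : s ≤ b' + d / 2 := hs.2.trans (min_le_left _ _)
          linarith
      have := le_csSup hbdd hb''mem
      rw [← hb'def] at this
      linarith
    rw [hb'eq] at hb'S
    exact core a ⟨ha.le, le_refl _⟩ hb'S
  -- Stage 2
  set w : ℝ → E := fun s => ∑ i, u i τ₀ • X i (γ s) with hwdef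
  set Δ : ℝ → ℝ := fun h => ∑ i, |U i (τ₀ + h) - U i τ₀ - h * u i τ₀| with hΔdef
  set Dp : ℝ → (E →L[ℝ] E) := fun s => ∑ j, U j τ₀ • fderiv ℝ (X j) (γ s) with hDpdef
  set w' : ℝ → E := fun s => ∑ i, u i τ₀ • (fderiv ℝ (X i) (γ s)) (∑ j, U j τ₀ • X j (γ s))
    with hw'def
  have hw : ∀ s, HasDerivAt w (w' s) s := by
    intro s
    apply HasDerivAt.fun_sum
    intro i _
    exact ((hXd i (γ s)).comp_hasDerivAt s (hγ s)).const_smul (u i τ₀)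
  have hDw : ∀ s : ℝ, Dp s (w s) = w' s := by
    intro s
    rw [hDpdef, hwdef, hw'def]
    simp only [ContinuousLinearMap.coe_sum', Finset.sum_apply,
      ContinuousLinearMap.coe_smul', Pi.smul_apply]
    calc ∑ j, U j τ₀ • (fderiv ℝ (X j) (γ s)) (∑ i, u i τ₀ • X i (γ s))
        = ∑ j, ∑ i, U j τ₀ • (u i τ₀ • (fderiv ℝ (X j) (γ s)) (X i (γ s))) := by
          apply Finset.sum_congr rfl; intro j _
          rw [map_sum, Finset.smul_sum]
          apply Finset.sum_congr rfl; intro i _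
          rw [_root_.map_smul]
      _ = ∑ i, ∑ j, U j τ₀ • (u i τ₀ • (fderiv ℝ (X j) (γ s)) (X i (γ s))) := Finset.sum_comm
      _ = ∑ i, u i τ₀ • (fderiv ℝ (X i) (γ s)) (∑ j, U j τ₀ • X j (γ s)) := by
          apply Finset.sum_congr rfl; intro i _
          rw [map_sum, Finset.smul_sum]
          apply Finset.sum_congr rfl; intro j _
          rw [_root_.map_smul, hcomm i j (γ s)]
          exact smul_comm _ _ _
  have hDpbd : ∀ s ∈ Icc (0:ℝ) a, ‖Dp s‖ ≤ cU * MD := by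
    intro s hs
    rw [hDpdef]
    calc ‖∑ j, U j τ₀ • fderiv ℝ (X j) (γ s)‖
        ≤ ∑ j, ‖U j τ₀ • fderiv ℝ (X j) (γ s)‖ := norm_sum_le _ _
      _ ≤ ∑ j, |U j τ₀| * MD := by
          apply Finset.sum_le_sum
          intro j _
          rw [norm_smul, Real.norm_eq_abs]
          exact mul_le_mul_of_nonneg_left (hMD j _ (hγK s hs)) (abs_nonneg _)
      _ = cU * MD := by rw [hcUdef, Finset.sum_mul]
  have hYd : ∀ z : E, HasFDerivAt (fun p => ∑ i, U i τ₀ • X i p)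
      (∑ j, U j τ₀ • fderiv ℝ (X j) z) z :=
    fun z => HasFDerivAt.fun_sum (fun j _ => (hXd j z).const_smul (U j τ₀))
  have stage2 : ∀ h : ℝ, |h| ≤ h₀ →
      ‖Φ (τ₀ + h) a x - γ a - h • (a • w a)‖ ≤
        c₂ * (MX * Δ h + (cu * L * c₁ + cU * L * c₁ ^ 2) * h ^ 2) := by
    intro h hh
    have hδbd : ∀ s ∈ Icc (0:ℝ) a, ‖Φ (τ₀ + h) s x - γ s‖ ≤ c₁ * |h| := stage1 h hh
    have hδr : ∀ s ∈ Icc (0:ℝ) a, ‖Φ (τ₀ + h) s x - γ s‖ ≤ r := by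
      intro s hs
      calc ‖Φ (τ₀ + h) s x - γ s‖ ≤ c₁ * |h| := hδbd s hs
        _ ≤ c₁ * h₀ := mul_le_mul_of_nonneg_left hh hc₁0
        _ ≤ r / 2 := hc₁h₀
        _ ≤ r := by linarith
    set εf : ℝ → E := fun s => Φ (τ₀ + h) s x - γ s - h • (s • w s) with hεdef
    have hε0 : εf 0 = 0 := by
      rw [hεdef]
      simp [hγdef, hΦ0]
    have hε' : ∀ s, HasDerivAt εf
        ((∑ i, U i (τ₀ + h) • X i (Φ (τ₀ + h) s x)) - (∑ i, U i τ₀ • X i (γ s))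
          - h • (w s + s • w' s)) s := by
      intro s
      apply HasDerivAt.sub ((hΦ (τ₀ + h) s x).sub (hγ s))
      apply HasDerivAt.const_smul
      have h2 := (hasDerivAt_id' s).fun_smul (hw s)
      convert h2 using 1
      rw [one_smul]
      abel
    have hεc : Continuous εf := by
      rw [continuous_iff_continuousAt]; exact fun s => (hε' s).continuousAt
    -- the identity
    have hident : ∀ s : ℝ,
        (∑ i, U i (τ₀ + h) • X i (Φ (τ₀ + h) s x)) - (∑ i, U i τ₀ • X i (γ s))
          - h • (w s + s • w' s)
        = Dp s (εf s)
          + ((∑ i, (U i (τ₀ + h) - U i τ₀ - h * u i τ₀) • X i (Φ (τ₀ + h) s x))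
             + h • (∑ i, u i τ₀ • (X i (Φ (τ₀ + h) s x) - X i (γ s)))
             + ((∑ i, U i τ₀ • X i (Φ (τ₀ + h) s x)) - (∑ i, U i τ₀ • X i (γ s))
                - Dp s (Φ (τ₀ + h) s x - γ s))) := by
      intro s
      have e1 : Dp s (εf s) = Dp s (Φ (τ₀ + h) s x - γ s) - h • (s • w' s) := by
        rw [hεdef]
        simp only [map_sub, _root_.map_smul]
        rw [hDw s]
      rw [e1]
      simp only [hwdef, sub_smul, smul_sub, smul_add, mul_smul,
        Finset.sum_sub_distrib, Finset.smul_sum]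
      abel
    -- norm bound on the error terms
    have hbound : ∀ s ∈ Ico (0:ℝ) a,
        ‖(∑ i, U i (τ₀ + h) • X i (Φ (τ₀ + h) s x)) - (∑ i, U i τ₀ • X i (γ s))
          - h • (w s + s • w' s)‖
        ≤ KK2 * ‖εf s‖ + (MX * Δ h + (cu * L * c₁ + cU * L * c₁ ^ 2) * h ^ 2) := by
      intro s hs
      have hsI : s ∈ Icc (0:ℝ) a := ⟨hs.1, hs.2.le⟩
      have hpK : γ s ∈ Ks := hγK s hsI
      have hqB : Φ (τ₀ + h) s x ∈ Metric.closedBall (γ s) r := by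
        rw [mem_closedBall, dist_eq_norm]; exact hδr s hsI
      obtain ⟨S, hconv, hsub, hLip⟩ := hS _ hpK
      have hqS : Φ (τ₀ + h) s x ∈ S := hsub hqB
      have hpS : γ s ∈ S := hsub (mem_closedBall_self hr.le)
      have hδ : ‖Φ (τ₀ + h) s x - γ s‖ ≤ c₁ * |h| := hδbd s hsI
      -- A bound
      have hA : ‖∑ i, (U i (τ₀ + h) - U i τ₀ - h * u i τ₀) • X i (Φ (τ₀ + h) s x)‖
          ≤ MX * Δ h := by
        calc ‖∑ i, (U i (τ₀ + h) - U i τ₀ - h * u i τ₀) • X i (Φ (τ₀ + h) s x)‖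
            ≤ ∑ i, ‖(U i (τ₀ + h) - U i τ₀ - h * u i τ₀) • X i (Φ (τ₀ + h) s x)‖ :=
              norm_sum_le _ _
          _ ≤ ∑ i, |U i (τ₀ + h) - U i τ₀ - h * u i τ₀| * MX := by
              apply Finset.sum_le_sum; intro i _
              rw [norm_smul, Real.norm_eq_abs]
              exact mul_le_mul_of_nonneg_left (hXq _ hpK _ hqB i) (abs_nonneg _)
          _ = MX * Δ h := by
              rw [hΔdef, Finset.mul_sum]
              exact Finset.sum_congr rfl fun i _ => mul_comm _ _
      -- B bound
      have hB : ‖h • ∑ i, u i τ₀ • (X i (Φ (τ₀ + h) s x) - X i (γ s))‖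
          ≤ cu * L * c₁ * h ^ 2 := by
        rw [norm_smul, Real.norm_eq_abs]
        have h1 : ‖∑ i, u i τ₀ • (X i (Φ (τ₀ + h) s x) - X i (γ s))‖
            ≤ cu * (L * (c₁ * |h|)) := by
          calc ‖∑ i, u i τ₀ • (X i (Φ (τ₀ + h) s x) - X i (γ s))‖
              ≤ ∑ i, ‖u i τ₀ • (X i (Φ (τ₀ + h) s x) - X i (γ s))‖ := norm_sum_le _ _
            _ ≤ ∑ i, |u i τ₀| * (L * (c₁ * |h|)) := by
                apply Finset.sum_le_sum; intro i _
                rw [norm_smul, Real.norm_eq_abs]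
                apply mul_le_mul_of_nonneg_left _ (abs_nonneg _)
                calc ‖X i (Φ (τ₀ + h) s x) - X i (γ s)‖
                    ≤ L * ‖Φ (τ₀ + h) s x - γ s‖ := (hLip i).1 _ hqS _ hpS
                  _ ≤ L * (c₁ * |h|) := mul_le_mul_of_nonneg_left hδ hL
            _ = cu * (L * (c₁ * |h|)) := by rw [hcudef, Finset.sum_mul]
        calc |h| * ‖∑ i, u i τ₀ • (X i (Φ (τ₀ + h) s x) - X i (γ s))‖
            ≤ |h| * (cu * (L * (c₁ * |h|))) :=
              mul_le_mul_of_nonneg_left h1 (abs_nonneg _)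
          _ = cu * L * c₁ * h ^ 2 := by rw [← sq_abs h]; ring
      -- C bound (Taylor)
      have hC : ‖(∑ i, U i τ₀ • X i (Φ (τ₀ + h) s x)) - (∑ i, U i τ₀ • X i (γ s))
          - Dp s (Φ (τ₀ + h) s x - γ s)‖ ≤ cU * L * c₁ ^ 2 * h ^ 2 := by
        have hseg : segment ℝ (γ s) (Φ (τ₀ + h) s x) ⊆ S := hconv.segment_subset hpS hqS
        have htay := Convex.norm_image_sub_le_of_norm_hasFDerivWithin_le'
          (f := fun p => ∑ i, U i τ₀ • X i p) (f' := fun z => ∑ j, U j τ₀ • fderiv ℝ (X j) z)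
          (φ := ∑ j, U j τ₀ • fderiv ℝ (X j) (γ s))
          (s := segment ℝ (γ s) (Φ (τ₀ + h) s x))
          (C := cU * L * ‖Φ (τ₀ + h) s x - γ s‖)
          (fun z _ => (hYd z).hasFDerivWithinAt) ?_ (convex_segment _ _)
          (left_mem_segment ℝ _ _) (right_mem_segment ℝ _ _)
        · calc ‖(∑ i, U i τ₀ • X i (Φ (τ₀ + h) s x)) - (∑ i, U i τ₀ • X i (γ s))
              - Dp s (Φ (τ₀ + h) s x - γ s)‖
              ≤ cU * L * ‖Φ (τ₀ + h) s x - γ s‖ * ‖Φ (τ₀ + h) s x - γ s‖ := htay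
            _ ≤ cU * L * (c₁ * |h|) * (c₁ * |h|) := by
                apply mul_le_mul _ hδ (norm_nonneg _) (by positivity)
                exact mul_le_mul_of_nonneg_left hδ (by positivity)
            _ = cU * L * c₁ ^ 2 * h ^ 2 := by rw [← sq_abs h]; ring
        · intro z hz
          have hzS : z ∈ S := hseg hz
          have hzp : ‖z - γ s‖ ≤ ‖Φ (τ₀ + h) s x - γ s‖ := by
            obtain ⟨t1, t2, ht1, ht2, hsum, rfl⟩ := hz
            have he : t1 • γ s + t2 • Φ (τ₀ + h) s x - γ s
                = t2 • (Φ (τ₀ + h) s x - γ s) := by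
              have ht1e : t1 = 1 - t2 := by linarith
              rw [ht1e]
              module
            rw [he, norm_smul, Real.norm_eq_abs, abs_of_nonneg ht2]
            nlinarith [norm_nonneg (Φ (τ₀ + h) s x - γ s)]
          calc ‖(∑ j, U j τ₀ • fderiv ℝ (X j) z) - ∑ j, U j τ₀ • fderiv ℝ (X j) (γ s)‖
              = ‖∑ j, U j τ₀ • (fderiv ℝ (X j) z - fderiv ℝ (X j) (γ s))‖ := by
                rw [← Finset.sum_sub_distrib]
                apply congrArg
                apply Finset.sum_congr rfl
                intro j _; rw [smul_sub]
            _ ≤ ∑ j, ‖U j τ₀ • (fderiv ℝ (X j) z - fderiv ℝ (X j) (γ s))‖ := norm_sum_le _ _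
            _ ≤ ∑ j, |U j τ₀| * (L * ‖Φ (τ₀ + h) s x - γ s‖) := by
                apply Finset.sum_le_sum; intro j _
                rw [norm_smul, Real.norm_eq_abs]
                apply mul_le_mul_of_nonneg_left _ (abs_nonneg _)
                calc ‖fderiv ℝ (X j) z - fderiv ℝ (X j) (γ s)‖
                    ≤ L * ‖z - γ s‖ := (hLip j).2 _ hzS _ hpS
                  _ ≤ L * ‖Φ (τ₀ + h) s x - γ s‖ := mul_le_mul_of_nonneg_left hzp hL
            _ = cU * L * ‖Φ (τ₀ + h) s x - γ s‖ := by
                rw [hcUdef, Finset.sum_mul, Finset.sum_mul]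
                apply Finset.sum_congr rfl
                intro j _; ring
      -- assemble
      rw [hident s]
      have hDpε : ‖Dp s (εf s)‖ ≤ KK2 * ‖εf s‖ := by
        calc ‖Dp s (εf s)‖ ≤ ‖Dp s‖ * ‖εf s‖ := (Dp s).le_opNorm _
          _ ≤ (cU * MD) * ‖εf s‖ := mul_le_mul_of_nonneg_right (hDpbd s hsI) (norm_nonneg _)
          _ ≤ KK2 * ‖εf s‖ := by
              apply mul_le_mul_of_nonneg_right _ (norm_nonneg _)
              rw [hKK2def]; linarith
      calc ‖Dp s (εf s) + (_ + _ + _)‖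
          ≤ ‖Dp s (εf s)‖ + ‖_ + _ + _‖ := norm_add_le _ _
        _ ≤ ‖Dp s (εf s)‖ + (‖_‖ + ‖_‖ + ‖_‖) := by
            apply add_le_add_right
            exact le_trans (norm_add_le _ _) (add_le_add_left (norm_add_le _ _) _)
        _ ≤ KK2 * ‖εf s‖ + (MX * Δ h + cu * L * c₁ * h ^ 2 + cU * L * c₁ ^ 2 * h ^ 2) := by
            apply add_le_add hDpε
            exact add_le_add (add_le_add hA hB) hC
        _ = KK2 * ‖εf s‖ + (MX * Δ h + (cu * L * c₁ + cU * L * c₁ ^ 2) * h ^ 2) := by ring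
    -- Gronwall for εf
    have hΔ0 : 0 ≤ Δ h := by
      rw [hΔdef]; exact Finset.sum_nonneg fun i _ => abs_nonneg _
    have hρ0 : 0 ≤ MX * Δ h + (cu * L * c₁ + cU * L * c₁ ^ 2) * h ^ 2 := by positivity
    have hgron := norm_le_gronwallBound_of_norm_deriv_right_le
      (f := εf)
      (f' := fun s => (∑ i, U i (τ₀ + h) • X i (Φ (τ₀ + h) s x)) - (∑ i, U i τ₀ • X i (γ s))
          - h • (w s + s • w' s))
      (δ := 0) (K := KK2) (ε := MX * Δ h + (cu * L * c₁ + cU * L * c₁ ^ 2) * h ^ 2)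
      (a := 0) (b := a)
      hεc.continuousOn (fun s' _ => (hε' s').hasDerivWithinAt)
      (by rw [hε0]; simp) hbound a ⟨ha.le, le_refl _⟩
    have hfin : ‖εf a‖ ≤ (MX * Δ h + (cu * L * c₁ + cU * L * c₁ ^ 2) * h ^ 2)
        * (Real.exp (KK2 * a) / KK2) := by
      refine le_trans hgron (gron_est' hKK2 hρ0 (by linarith))
    calc ‖Φ (τ₀ + h) a x - γ a - h • (a • w a)‖ = ‖εf a‖ := rfl
      _ ≤ (MX * Δ h + (cu * L * c₁ + cU * L * c₁ ^ 2) * h ^ 2)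
            * (Real.exp (KK2 * a) / KK2) := hfin
      _ = c₂ * (MX * Δ h + (cu * L * c₁ + cU * L * c₁ ^ 2) * h ^ 2) := by
          rw [hc₂def]; ring
  -- conclusion
  rw [hasDerivAt_iff_isLittleO]
  set K4 : ℝ := cu * L * c₁ + cU * L * c₁ ^ 2 with hK4def
  have hbigO : (fun τ => Φ τ a x - Φ τ₀ a x - (τ - τ₀) • (a • ∑ i, u i τ₀ • X i (Φ τ₀ a x)))
      =O[𝓝 τ₀] (fun τ => c₂ * (MX * Δ (τ - τ₀) + K4 * (τ - τ₀) ^ 2)) := by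
    rw [Asymptotics.isBigO_iff]
    refine ⟨1, ?_⟩
    filter_upwards [Metric.closedBall_mem_nhds τ₀ hh₀] with τ hτ
    have hτh : |τ - τ₀| ≤ h₀ := by rwa [mem_closedBall, Real.dist_eq] at hτ
    have hst := stage2 (τ - τ₀) hτh
    rw [show τ₀ + (τ - τ₀) = τ by ring] at hst
    calc ‖Φ τ a x - Φ τ₀ a x - (τ - τ₀) • (a • ∑ i, u i τ₀ • X i (Φ τ₀ a x))‖
        ≤ c₂ * (MX * Δ (τ - τ₀) + K4 * (τ - τ₀) ^ 2) := hst
      _ ≤ 1 * ‖c₂ * (MX * Δ (τ - τ₀) + K4 * (τ - τ₀) ^ 2)‖ := by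
          rw [one_mul]; exact le_abs_self _
  apply hbigO.trans_isLittleO
  have hΔo : (fun τ => Δ (τ - τ₀)) =o[𝓝 τ₀] (fun τ => τ - τ₀) := by
    have heq : (fun τ => Δ (τ - τ₀)) = fun τ => ∑ i, |U i τ - U i τ₀ - (τ - τ₀) * u i τ₀| := by
      funext τ
      rw [hΔdef]
      simp only
      rw [show τ₀ + (τ - τ₀) = τ by ring]
    rw [heq]
    apply Asymptotics.IsLittleO.fun_sum
    intro i _
    have h1 := hdiff i
    rw [hasDerivAt_iff_isLittleO] at h1
    have h2 : (fun τ => U i τ - U i τ₀ - (τ - τ₀) * u i τ₀) =o[𝓝 τ₀] (fun τ => τ - τ₀) := by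
      simpa [smul_eq_mul] using h1
    simpa [Real.norm_eq_abs] using h2.norm_left
  have hsq : (fun τ : ℝ => (τ - τ₀) ^ 2) =o[𝓝 τ₀] (fun τ => τ - τ₀) := by
    have h1 : (fun τ : ℝ => τ - τ₀) =o[𝓝 τ₀] (fun _ => (1 : ℝ)) := by
      rw [Asymptotics.isLittleO_one_iff ℝ]
      have h3 : Tendsto (fun τ : ℝ => τ - τ₀) (𝓝 τ₀) (𝓝 (τ₀ - τ₀)) :=
        ((continuous_id (X := ℝ)).sub (continuous_const (y := τ₀))).tendsto τ₀
      simpa using h3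
    have h2 := h1.mul_isBigO (Asymptotics.isBigO_refl (fun τ : ℝ => τ - τ₀) (𝓝 τ₀))
    simpa [sq, one_mul] using h2
  have hfinal : (fun τ => MX * Δ (τ - τ₀) + K4 * (τ - τ₀) ^ 2) =o[𝓝 τ₀] (fun τ => τ - τ₀) :=
    (hΔo.const_mul_left MX).add (hsq.const_mul_left K4)
  exact hfinal.const_mul_left c₂
end Key

/-- for complete pairwise commuting vector fields `X₁,…,X_l` and an
`L∞` signal `u` with antiderivative `U`, the (global) maximal solution of
`ξ' = aω uⁱ(ωt) Xᵢ(ξ)`, `ξ(0) = ξ₀` is `t ↦ Φ^{X^{ωt}}_a(ξ₀)`, where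
`X^τ = Uⁱ(τ) Xᵢ` and `Φ τ` denotes its flow. -/
theorem solution_is_flow_of_averaged_field
    {E : Type*} [NormedAddCommGroup E] [NormedSpace ℝ E] {l : ℕ}
    (X : Fin l → E → E) (hX : ∀ i, ContDiff ℝ (⊤ : ℕ∞) (X i))
    -- pairwise commuting: the Lie brackets [Xᵢ, Xⱼ] vanish
    (hcomm : ∀ i j p, fderiv ℝ (X j) p (X i p) = fderiv ℝ (X i) p (X j p))
    (u : Fin l → ℝ → ℝ) (hu : ∀ i, Measurable (u i))
    (hu' : ∀ i, ∃ C, ∀ τ, |u i τ| ≤ C)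
    (U : Fin l → ℝ → ℝ) (hU : ∀ i τ, U i τ = ∫ σ in (0:ℝ)..τ, u i σ)
    (hUdiff : ∀ᵐ τ ∂volume, ∀ i, HasDerivAt (U i) (u i τ) τ)
    -- completeness: each `X^τ` has a globally defined flow `Φ τ`
    (Φ : ℝ → ℝ → E → E)
    (hΦ0 : ∀ τ x, Φ τ 0 x = x)
    (hΦ : ∀ τ a x, HasDerivAt (fun s => Φ τ s x) (∑ i, U i τ • X i (Φ τ a x)) a)
    (a ω : ℝ) (ha : 0 < a) (hω : 0 < ω) (ξ₀ : E) :
    Φ (ω * 0) a ξ₀ = ξ₀ ∧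
    (∀ᵐ t ∂volume,
      HasDerivAt (fun t => Φ (ω * t) a ξ₀)
        ((a * ω) • ∑ i, u i (ω * t) • X i (Φ (ω * t) a ξ₀)) t) := by
  -- Part 1
  have hU0 : ∀ i, U i 0 = 0 := fun i => by rw [hU]; exact intervalIntegral.integral_same
  have hconst : ∀ s, HasDerivAt (fun s => Φ 0 s ξ₀) 0 s := by
    intro s
    have h1 := hΦ 0 s ξ₀
    have h2 : (∑ i, U i 0 • X i (Φ 0 s ξ₀)) = 0 := by
      apply Finset.sum_eq_zero
      intro i _
      rw [hU0 i, zero_smul]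
    rwa [h2] at h1
  have hpart1 : Φ (ω * 0) a ξ₀ = ξ₀ := by
    rw [mul_zero]
    have hdifff : Differentiable ℝ (fun s => Φ 0 s ξ₀) := fun s => (hconst s).differentiableAt
    have hderiv0 : ∀ s, deriv (fun s => Φ 0 s ξ₀) s = 0 := fun s => (hconst s).deriv
    have heq := is_const_of_deriv_eq_zero hdifff hderiv0 a 0
    rw [heq, hΦ0]
  refine ⟨hpart1, ?_⟩
  -- Lipschitz bounds for U
  choose C hC using hu'
  have hint : ∀ (i) (c d : ℝ), IntervalIntegrable (u i) volume c d := by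
    intro i c d
    rw [intervalIntegrable_iff]
    apply MeasureTheory.Integrable.mono' (g := fun _ => C i)
      (integrableOn_const measure_Ioc_lt_top.ne)
      ((hu i).aestronglyMeasurable.restrict)
    exact Filter.Eventually.of_forall fun τ => by rw [Real.norm_eq_abs]; exact hC i τ
  have hulip : ∀ i σ τ, |U i σ - U i τ| ≤ (max (C i) 0) * |σ - τ| := by
    intro i σ τ
    have heq : U i σ - U i τ = ∫ s in τ..σ, u i s := by
      rw [hU, hU, ← intervalIntegral.integral_interval_sub_left (hint i 0 σ) (hint i 0 τ)]
    rw [heq, ← Real.norm_eq_abs]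
    apply intervalIntegral.norm_integral_le_of_norm_le_const
    intro s _
    rw [Real.norm_eq_abs]
    exact (hC i s).trans (le_max_left _ _)
  -- transfer the a.e. differentiability along t ↦ ω t
  have hae : ∀ᵐ t ∂volume, ∀ i, HasDerivAt (U i) (u i (ω * t)) (ω * t) := by
    rw [ae_iff] at hUdiff ⊢
    obtain ⟨N, hsub, hmeas, hnull⟩ := exists_measurable_superset_of_null hUdiff
    have hpre : {t : ℝ | ¬ ∀ i, HasDerivAt (U i) (u i (ω * t)) (ω * t)}
        ⊆ (fun t => ω * t) ⁻¹' N := fun t ht => hsub ht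
    refine measure_mono_null hpre ?_
    rw [show ((fun t => ω * t) ⁻¹' N) = ((ω * ·) ⁻¹' N) from rfl,
      Real.volume_preimage_mul_left (ne_of_gt hω), hnull, mul_zero]
  filter_upwards [hae] with t ht
  have hkey := key X hX hcomm u U (fun i => max (C i) 0) (fun i => le_max_right _ _)
    hulip Φ hΦ0 hΦ a ha ξ₀ (ω * t) ht
  have hmul : HasDerivAt (fun t : ℝ => ω * t) ω t := by
    simpa using (hasDerivAt_id t).const_mul ω
  have hcomp := hkey.scomp t hmul
  have : HasDerivAt (fun t => Φ (ω * t) a ξ₀)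
      (ω • (a • ∑ i, u i (ω * t) • X i (Φ (ω * t) a ξ₀))) t := hcomp
  rwa [smul_smul, mul_comm ω a] at this
end

section
/- Let ψ: ℝ² → ℝ satisfy: ψ(p) < y⋆ = ψ(p⋆) for all p ≠ p⋆; ‖∇²ψ(p)‖ ≤ c₁ for all p; ∇ψ(p) ≠ 0 for p ≠ p⋆; and ψ⁻¹([y, ∞)) compact for all y ∈ (inf ψ, y⋆). For ε > 0 define V_ε(x) := y⋆ − ψ(p) + ε⟨∇ψ(p), o − o_⊥⟩² on X = ℝ² × S¹, where x = (p, o) and o_⊥ is the positively oriented unit normal to o. Then there exists ε₁ > 0 such that for all ε ∈ (0, ε₁): (i) 0 < V_ε(x) < z⋆ := y⋆ − inf ψ for every x = (p,o) with p ≠ p⋆; and (ii) the sublevel set {x : V_ε(x) ≤ z} is compact for every z ∈ (0, z⋆). -/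
open Metric
open scoped RealInnerProductSpace

noncomputable section

/-- Rotation by +90°: for `o ∈ S¹`, `perp o` is the unique unit vector such that
`(o, perp o)` is a positively oriented orthonormal basis of `ℝ²`. -/
def perp (o : EuclideanSpace ℝ (Fin 2)) : EuclideanSpace ℝ (Fin 2) :=
  (WithLp.equiv 2 (Fin 2 → ℝ)).symm ![-(o 1), o 0]

/-- The Lyapunov function candidate `V_ε(p, o) = y⋆ − ψ(p) + ε⟨∇ψ(p), o − o_⊥⟩²`. -/
def Vfun (ψ : EuclideanSpace ℝ (Fin 2) → ℝ) (ystar ε : ℝ)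
    (p o : EuclideanSpace ℝ (Fin 2)) : ℝ :=
  ystar - ψ p + ε * (inner ℝ (gradient ψ p) (o - perp o) : ℝ) ^ 2

/-!
Since `V_ε ≥ y⋆ - ψ`, positivity off `p⋆` is immediate, and every sublevel set of `V_ε` lies
in a superlevel set of `ψ` times the circle, hence is compact. For the upper bound, Cauchy–Schwarz
gives `V_ε(p, o) ≤ y⋆ - ψ(p) + 2ε‖∇ψ(p)‖²`, while the descent lemma for the `c₁`-Lipschitz
gradient shows that the gradient step `p - ∇ψ(p)/c₁` lowers `ψ` by at least `‖∇ψ(p)‖²/(2c₁)`.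
For `ε < 1/(4c₁)` and `∇ψ(p) ≠ 0` this exceeds `2ε‖∇ψ(p)‖²`, so `inf ψ < y⋆ - V_ε(p, o)`.
-/

open scoped NNReal

section Descent

variable {E : Type*} [NormedAddCommGroup E] [InnerProductSpace ℝ E] [CompleteSpace E]

lemma lipschitzWith_gradient_of_norm_fderiv_le {f : E → ℝ} (hf : ContDiff ℝ 2 f) {C : ℝ}
    (bound : ∀ x, ‖fderiv ℝ (gradient f) x‖ ≤ C) : LipschitzWith C.toNNReal (gradient f) := by
  have hgrad : ContDiff ℝ 1 (gradient f) :=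
    (InnerProductSpace.toDual ℝ E).symm.contDiff.comp (hf.fderiv_right le_rfl)
  refine lipschitzWith_of_nnnorm_fderiv_le (hgrad.differentiable one_ne_zero) fun x => ?_
  rw [← NNReal.coe_le_coe, coe_nnnorm]
  exact (bound x).trans (Real.le_coe_toNNReal C)

lemma le_add_inner_gradient_add_sq {f : E → ℝ} (hf : Differentiable ℝ f) {L : ℝ≥0}
    (hL : LipschitzWith L (gradient f)) (p v : E) :
    f (p + v) ≤ f p + ⟪gradient f p, v⟫ + L / 2 * ‖v‖ ^ 2 := by
  set g : ℝ → ℝ := fun t => f (p + t • v) - t * ⟪gradient f p, v⟫ - L / 2 * t ^ 2 * ‖v‖ ^ 2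
  have hg : ∀ t, HasDerivAt g
      (⟪gradient f (p + t • v) - gradient f p, v⟫ - L * t * ‖v‖ ^ 2) t := by
    intro t
    have hline : HasDerivAt (fun t : ℝ => p + t • v) v t := by
      simpa using ((hasDerivAt_id t).smul_const v).const_add p
    have hft := (hf (p + t • v)).hasGradientAt.hasFDerivAt.comp_hasDerivAt t hline
    rw [InnerProductSpace.toDual_apply_apply] at hft
    have h := (hft.sub ((hasDerivAt_id t).mul_const ⟪gradient f p, v⟫)).sub
      (((hasDerivAt_pow 2 t).const_mul ((L : ℝ) / 2)).mul_const (‖v‖ ^ 2))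
    refine h.congr_deriv ?_
    rw [inner_sub_left]
    push_cast
    ring
  have hg' : ∀ t, 0 ≤ t →
      ⟪gradient f (p + t • v) - gradient f p, v⟫ - L * t * ‖v‖ ^ 2 ≤ 0 := by
    intro t ht
    have hlip : ‖gradient f (p + t • v) - gradient f p‖ ≤ L * (t * ‖v‖) := by
      simpa [dist_eq_norm, norm_smul, abs_of_nonneg ht] using hL.dist_le_mul (p + t • v) p
    rw [sub_nonpos]
    calc ⟪gradient f (p + t • v) - gradient f p, v⟫
        ≤ ‖gradient f (p + t • v) - gradient f p‖ * ‖v‖ := real_inner_le_norm _ _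
      _ ≤ L * (t * ‖v‖) * ‖v‖ := by gcongr
      _ = L * t * ‖v‖ ^ 2 := by ring
  have hanti : AntitoneOn g (Set.Ici 0) :=
    antitoneOn_of_hasDerivWithinAt_nonpos (convex_Ici 0)
      (fun t _ => (hg t).continuousAt.continuousWithinAt)
      (fun t _ => (hg t).hasDerivWithinAt)
      (fun t ht => hg' t (by simpa using (interior_subset ht : t ∈ Set.Ici (0:ℝ))))
  have h := hanti Set.self_mem_Ici (show (1:ℝ) ∈ Set.Ici 0 by norm_num) zero_le_one
  simp only [g, one_smul, zero_smul, add_zero] at h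
  linarith

lemma apply_sub_inv_smul_gradient_le {f : E → ℝ} (hf : Differentiable ℝ f) {L : ℝ≥0}
    (hL : LipschitzWith L (gradient f)) (hL0 : L ≠ 0) (p : E) :
    f (p - (L : ℝ)⁻¹ • gradient f p) ≤ f p - ‖gradient f p‖ ^ 2 / (2 * L) := by
  have hL' : (0 : ℝ) < L := by positivity
  have h := le_add_inner_gradient_add_sq hf hL p (-((L : ℝ)⁻¹ • gradient f p))
  rw [← sub_eq_add_neg, inner_neg_right, real_inner_smul_right, real_inner_self_eq_norm_sq,
    norm_neg, norm_smul, Real.norm_of_nonneg (inv_nonneg.2 hL'.le)] at h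
  convert h using 1
  field_simp
  ring

end Descent

lemma EReal.coe_lt_coe_sub_iInf_coe_iff {ι : Type*} (f : ι → ℝ) (a z : ℝ) :
    (z : EReal) < a - ⨅ i, (f i : EReal) ↔ ∃ i, f i < a - z := by
  rw [EReal.lt_sub_iff_add_lt (.inr (EReal.coe_ne_top z)) (.inr (EReal.coe_ne_bot z)), add_comm,
    ← EReal.lt_sub_iff_add_lt (.inl (EReal.coe_ne_bot z)) (.inl (EReal.coe_ne_top z)),
    ← EReal.coe_sub, iInf_lt_iff]
  simp only [EReal.coe_lt_coe_iff]

local notation "ℝ²" => EuclideanSpace ℝ (Fin 2)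

lemma inner_self_perp (o : ℝ²) : ⟪o, perp o⟫ = 0 := by
  simp [PiLp.inner_apply, Fin.sum_univ_two, perp]
  ring

lemma norm_perp (o : ℝ²) : ‖perp o‖ = ‖o‖ := by
  simp [EuclideanSpace.norm_eq, Fin.sum_univ_two, perp, add_comm]

lemma continuous_perp : Continuous perp := by
  unfold perp
  exact (PiLp.continuous_toLp 2 _).comp (by fun_prop)

lemma inner_sub_perp_sq_le {o : ℝ²} (ho : o ∈ sphere (0 : ℝ²) 1) (g : ℝ²) :
    ⟪g, o - perp o⟫ ^ 2 ≤ 2 * ‖g‖ ^ 2 := by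
  have hnorm : ‖o - perp o‖ ^ 2 = 2 := by
    rw [norm_sub_sq_real, inner_self_perp, norm_perp, mem_sphere_zero_iff_norm.1 ho]
    norm_num
  calc ⟪g, o - perp o⟫ ^ 2 = |⟪g, o - perp o⟫| ^ 2 := (sq_abs _).symm
    _ ≤ (‖g‖ * ‖o - perp o‖) ^ 2 := by gcongr; exact abs_real_inner_le_norm _ _
    _ = 2 * ‖g‖ ^ 2 := by rw [mul_pow, hnorm, mul_comm]

section Vfun

variable {ψ : ℝ² → ℝ} {ystar ε : ℝ}

lemma sub_le_Vfun (hε : 0 ≤ ε) (p o : ℝ²) : ystar - ψ p ≤ Vfun ψ ystar ε p o :=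
  le_add_of_nonneg_right (by positivity)

lemma Vfun_le (hε : 0 ≤ ε) {o : ℝ²} (ho : o ∈ sphere (0 : ℝ²) 1) (p : ℝ²) :
    Vfun ψ ystar ε p o ≤ ystar - ψ p + 2 * ε * ‖gradient ψ p‖ ^ 2 := by
  have := mul_le_mul_of_nonneg_left (inner_sub_perp_sq_le ho (gradient ψ p)) hε
  unfold Vfun
  linarith

lemma continuous_Vfun (hψ : ContDiff ℝ 2 ψ) :
    Continuous fun x : ℝ² × ℝ² => Vfun ψ ystar ε x.1 x.2 := by
  have hgrad : Continuous (gradient ψ) :=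
    (InnerProductSpace.toDual ℝ ℝ²).symm.continuous.comp (hψ.continuous_fderiv (by norm_num))
  have := continuous_perp
  unfold Vfun
  fun_prop

lemma isCompact_Vfun_sublevel (hψ : ContDiff ℝ 2 ψ) (hε : 0 ≤ ε) {z : ℝ}
    (hK : IsCompact {p | ystar - z ≤ ψ p}) :
    IsCompact {x : ℝ² × ℝ² | x.2 ∈ sphere (0 : ℝ²) 1 ∧ Vfun ψ ystar ε x.1 x.2 ≤ z} := by
  refine (hK.prod (isCompact_sphere 0 1)).of_isClosed_subset
    ((isClosed_sphere.preimage continuous_snd).inter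
      (isClosed_le (continuous_Vfun hψ) continuous_const)) ?_
  rintro ⟨p, o⟩ ⟨ho, hV⟩
  have := sub_le_Vfun (ψ := ψ) (ystar := ystar) hε p o
  exact ⟨show ystar - z ≤ ψ p by linarith, ho⟩

end Vfun

/-- Lemma 1: properties of the Lyapunov function candidate `V_ε` on
`X = ℝ² × S¹` for small `ε`. -/
theorem Vfun_positive_and_sublevel_compact
    (ψ : EuclideanSpace ℝ (Fin 2) → ℝ) (hψ : ContDiff ℝ 2 ψ)
    (pstar : EuclideanSpace ℝ (Fin 2)) (c₁ : ℝ) (hc₁ : 0 < c₁)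
    (hmax : ∀ p, p ≠ pstar → ψ p < ψ pstar)
    (hhess : ∀ p, ‖fderiv ℝ (fun q => gradient ψ q) p‖ ≤ c₁)
    (hgrad : ∀ p, p ≠ pstar → gradient ψ p ≠ 0)
    (hlevel : ∀ y : ℝ, (∃ p, ψ p < y) → y < ψ pstar → IsCompact {p | y ≤ ψ p}) :
    ∃ ε₁ : ℝ, 0 < ε₁ ∧ ∀ ε : ℝ, 0 < ε → ε < ε₁ →
      (∀ p o, o ∈ sphere (0 : EuclideanSpace ℝ (Fin 2)) 1 → p ≠ pstar →
        0 < Vfun ψ (ψ pstar) ε p o ∧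
        ((Vfun ψ (ψ pstar) ε p o : EReal) < (ψ pstar : EReal) - ⨅ q, (ψ q : EReal))) ∧
      (∀ z : ℝ, 0 < z → ((z : EReal) < (ψ pstar : EReal) - ⨅ q, (ψ q : EReal)) →
        IsCompact {x : EuclideanSpace ℝ (Fin 2) × EuclideanSpace ℝ (Fin 2) |
          x.2 ∈ sphere (0 : EuclideanSpace ℝ (Fin 2)) 1 ∧
          Vfun ψ (ψ pstar) ε x.1 x.2 ≤ z}) := by
  have hdiff : Differentiable ℝ ψ := hψ.differentiable (by norm_num)
  have hlip := lipschitzWith_gradient_of_norm_fderiv_le hψ hhess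
  have hL : (c₁.toNNReal : ℝ) = c₁ := Real.coe_toNNReal _ hc₁.le
  refine ⟨1 / (4 * c₁), by positivity, fun ε hε hε₁ => ⟨fun p o ho hp => ?_, fun z hz hzI => ?_⟩⟩
  · have hV_ge := sub_le_Vfun (ψ := ψ) (ystar := ψ pstar) hε.le p o
    have hV_le := Vfun_le (ψ := ψ) (ystar := ψ pstar) hε.le ho p
    refine ⟨by linarith [hmax p hp], (EReal.coe_lt_coe_sub_iInf_coe_iff ψ _ _).2 ⟨_,
      (apply_sub_inv_smul_gradient_le hdiff hlip (by simpa using hc₁) p).trans_lt ?_⟩⟩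
    have hG : 0 < ‖gradient ψ p‖ ^ 2 := pow_pos (norm_pos_iff.2 (hgrad p hp)) 2
    have hstep : 2 * ε * ‖gradient ψ p‖ ^ 2 < ‖gradient ψ p‖ ^ 2 / (2 * c₁) := by
      rw [lt_div_iff₀ (by positivity)]
      rw [lt_div_iff₀ (by positivity)] at hε₁
      nlinarith
    rw [hL]
    linarith
  · obtain ⟨q, hq⟩ := (EReal.coe_lt_coe_sub_iInf_coe_iff ψ _ _).1 hzI
    exact isCompact_Vfun_sublevel hψ hε.le (hlevel _ ⟨q, hq⟩ (by linarith))
end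
end
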